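/- Sensitivity of SGD on convex objectives: let E be a real inner product space, X a type of examples, and ℓ : E → X → ℝ a loss such that for every a ∈ X the map w ↦ ℓ(w, a) is differentiable, convex on all of E, Lipschitz with constant L, and β-smooth (its gradient is Lipschitz with constant β). Fix a step size η with 0 < η ≤ 2/β. Let x, x' : Fin N → X be two neighbouring datasets differing only at a single index i₀, let s : ℕ → Fin N be any traversal order (the sequence of sampled indices, determined by the common random seed), and define iterates w 0 = w' 0, w(t+1) = w(t) − η • ∇_w ℓ(w(t), x(s t)) and w'(t+1) = w'(t) − η • ∇_w ℓ(w'(t), x'(s t)). Then for every T, ‖w(T) − w'(T)‖ ≤ 2ηL · |{t < T : s t = i₀}|. In particular, for k full passes over the data, ‖w(T) − w'(T)‖ ≤ 2kLη. -/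

import Mathlib

/-!
For a convex `b`-smooth `f`, the gradient is co-coercive,
`‖∇f u - ∇f v‖² / b ≤ ⟪∇f u - ∇f v, u - v⟫`, which follows by comparing the convexity lower
bound with the descent-lemma upper bound at a well-chosen point. Expanding the square then
shows that the gradient step `u ↦ u - η ∇f u` is nonexpansive once `η ≤ 2 / b`. Along the two
SGD runs the distance therefore never grows at steps that sample a shared example, and at each
visit of `i₀` it grows by at most `η ‖∇ℓ(·, x i₀) - ∇ℓ(·, x' i₀)‖ ≤ 2ηL`.
-/

open scoped NNReal RealInnerProductSpace Gradient

open Set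

section GradientStep

variable {E : Type*} [NormedAddCommGroup E] [InnerProductSpace ℝ E] [CompleteSpace E]
  {f g : E → ℝ}

theorem HasGradientAt.hasDerivAt_comp_add_smul {f' u d : E} {t : ℝ}
    (hf : HasGradientAt f f' (u + t • d)) :
    HasDerivAt (fun s : ℝ => f (u + s • d)) ⟪f', d⟫ t := by
  have hline : HasDerivAt (fun s : ℝ => u + s • d) d t := by
    simpa using ((hasDerivAt_id t).smul_const d).const_add u
  simpa [InnerProductSpace.toDual_apply_apply, Function.comp_def] using
    hf.hasFDerivAt.comp_hasDerivAt t hline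

theorem ConvexOn.add_inner_gradient_le (hc : ConvexOn ℝ univ f) {u : E}
    (hf : DifferentiableAt ℝ f u) (v : E) :
    f u + ⟪∇ f u, v - u⟫ ≤ f v := by
  have hline : ConvexOn ℝ univ (fun t : ℝ => f (u + t • (v - u))) := by
    simpa [Function.comp_def, AffineMap.lineMap_apply, add_comm] using
      hc.comp_affineMap (AffineMap.lineMap u v : ℝ →ᵃ[ℝ] E)
  have hderiv : HasDerivAt (fun t : ℝ => f (u + t • (v - u))) ⟪∇ f u, v - u⟫ 0 :=
    HasGradientAt.hasDerivAt_comp_add_smul (by simpa using hf.hasGradientAt)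
  have := hline.le_slope_of_hasDerivAt (mem_univ 0) (mem_univ 1) one_pos hderiv
  simp only [slope_def_field, one_smul, zero_smul, add_zero, add_sub_cancel, sub_zero,
    div_one] at this
  linarith

theorem le_add_inner_gradient_add_of_lipschitzWith_gradient {b : ℝ≥0}
    (hf : Differentiable ℝ f) (hl : LipschitzWith b (∇ f)) (u v : E) :
    f v ≤ f u + ⟪∇ f u, v - u⟫ + b / 2 * ‖v - u‖ ^ 2 := by
  set d := v - u
  have hφ : ∀ t : ℝ, HasDerivAt (fun t => f (u + t • d) - t * ⟪∇ f u, d⟫)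
      (⟪∇ f (u + t • d), d⟫ - ⟪∇ f u, d⟫) t := fun t =>
    (((hf _).hasGradientAt.hasDerivAt_comp_add_smul).sub
      ((hasDerivAt_id t).mul_const ⟪∇ f u, d⟫)).congr_deriv (by rw [one_mul])
  have hB : ∀ t : ℝ, HasDerivAt (fun t => f u + b / 2 * t ^ 2 * ‖d‖ ^ 2)
      (b * t * ‖d‖ ^ 2) t := fun t =>
    ((((hasDerivAt_pow 2 t).const_mul ((b : ℝ) / 2)).mul_const (‖d‖ ^ 2)).const_add
      (f u)).congr_deriv (by simp only [Nat.cast_ofNat, pow_one, Nat.add_one_sub_one]; ring)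
  have hbound : ∀ t ∈ Ico (0 : ℝ) 1, ⟪∇ f (u + t • d), d⟫ - ⟪∇ f u, d⟫ ≤ b * t * ‖d‖ ^ 2 :=
    fun t ht => calc
      ⟪∇ f (u + t • d), d⟫ - ⟪∇ f u, d⟫ = ⟪∇ f (u + t • d) - ∇ f u, d⟫ := (inner_sub_left ..).symm
      _ ≤ ‖∇ f (u + t • d) - ∇ f u‖ * ‖d‖ := real_inner_le_norm _ _
      _ ≤ b * ‖(u + t • d) - u‖ * ‖d‖ := by gcongr; exact hl.norm_sub_le _ _
      _ = b * t * ‖d‖ ^ 2 := by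
        rw [add_sub_cancel_left, norm_smul, Real.norm_of_nonneg ht.1]; ring
  have := image_le_of_deriv_right_le_deriv_boundary
    (fun t _ => (hφ t).continuousAt.continuousWithinAt) (fun t _ => (hφ t).hasDerivWithinAt)
    (by simp) (fun t _ => (hB t).continuousAt.continuousWithinAt)
    (fun t _ => (hB t).hasDerivWithinAt) hbound (right_mem_Icc.2 zero_le_one)
  simp only [one_smul, one_mul, one_pow, mul_one, d, add_sub_cancel] at this
  linarith

theorem ConvexOn.add_inner_gradient_add_sq_div_le (hc : ConvexOn ℝ univ f)
    (hf : Differentiable ℝ f) {b : ℝ≥0} (hb : 0 < b) (hl : LipschitzWith b (∇ f)) (u v : E) :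
    f u + ⟪∇ f u, v - u⟫ + ‖∇ f v - ∇ f u‖ ^ 2 / (2 * b) ≤ f v := by
  set Δ := ∇ f v - ∇ f u
  -- `z` is the gradient step from `v` for `f - ⟪∇ f u, ·⟫`, which is minimal at `u`.
  set z := v - (b : ℝ)⁻¹ • Δ
  have hzv : z - v = -((b : ℝ)⁻¹ • Δ) := by simp only [z]; abel
  have hzu : ⟪∇ f u, z - u⟫ = ⟪∇ f u, v - u⟫ + ⟪∇ f u, z - v⟫ := by
    rw [← inner_add_right, sub_add_sub_cancel']
  have hinner : ⟪∇ f u, z - v⟫ - ⟪∇ f v, z - v⟫ = (b : ℝ)⁻¹ * ‖Δ‖ ^ 2 := by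
    rw [← inner_sub_left, hzv, inner_neg_right, real_inner_smul_right, ← neg_sub,
      inner_neg_left, real_inner_self_eq_norm_sq]
    ring
  have hnorm : ‖z - v‖ ^ 2 = (b : ℝ)⁻¹ ^ 2 * ‖Δ‖ ^ 2 := by
    rw [hzv, norm_neg, norm_smul, Real.norm_of_nonneg (by positivity), mul_pow]
  have hconst : (b : ℝ)⁻¹ * ‖Δ‖ ^ 2 - b / 2 * ((b : ℝ)⁻¹ ^ 2 * ‖Δ‖ ^ 2)
      = ‖Δ‖ ^ 2 / (2 * b) := by
    field_simp
    ring
  have hconv := hc.add_inner_gradient_le (hf u) z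
  have hdesc := le_add_inner_gradient_add_of_lipschitzWith_gradient hf hl v z
  rw [hnorm] at hdesc
  linarith

theorem ConvexOn.norm_sub_gradient_sq_div_le_inner (hc : ConvexOn ℝ univ f)
    (hf : Differentiable ℝ f) {b : ℝ≥0} (hb : 0 < b) (hl : LipschitzWith b (∇ f)) (u v : E) :
    ‖∇ f u - ∇ f v‖ ^ 2 / b ≤ ⟪∇ f u - ∇ f v, u - v⟫ := by
  have huv := hc.add_inner_gradient_add_sq_div_le hf hb hl u v
  have hvu := hc.add_inner_gradient_add_sq_div_le hf hb hl v u
  have hinner : ⟪∇ f u - ∇ f v, u - v⟫ = -⟪∇ f u, v - u⟫ - ⟪∇ f v, u - v⟫ := by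
    rw [inner_sub_left, ← neg_sub v u, inner_neg_right]
  have hsplit : ‖∇ f u - ∇ f v‖ ^ 2 / b
      = ‖∇ f v - ∇ f u‖ ^ 2 / (2 * b) + ‖∇ f u - ∇ f v‖ ^ 2 / (2 * b) := by
    rw [norm_sub_rev]
    ring
  linarith

theorem ConvexOn.lipschitzWith_one_sub_smul_gradient (hc : ConvexOn ℝ univ f)
    (hf : Differentiable ℝ f) {b : ℝ≥0} (hb : 0 < b) (hl : LipschitzWith b (∇ f))
    {η : ℝ} (hη0 : 0 ≤ η) (hη : η ≤ 2 / b) :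
    LipschitzWith 1 (fun u => u - η • ∇ f u) := by
  refine lipschitzWith_iff_norm_sub_le.2 fun u v => ?_
  set Δ := ∇ f u - ∇ f v
  have hrw : (u - η • ∇ f u) - (v - η • ∇ f v) = (u - v) - η • Δ := by
    rw [smul_sub]; abel
  have hcoco := hc.norm_sub_gradient_sq_div_le_inner hf hb hl u v
  have hstep : η ^ 2 * ‖Δ‖ ^ 2 ≤ 2 * η * ⟪Δ, u - v⟫ := calc
    η ^ 2 * ‖Δ‖ ^ 2 ≤ η * (2 / b) * ‖Δ‖ ^ 2 := by rw [sq η]; gcongr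
    _ = 2 * η * (‖Δ‖ ^ 2 / b) := by ring
    _ ≤ 2 * η * ⟪Δ, u - v⟫ := by gcongr
  have hsq : ‖(u - v) - η • Δ‖ ^ 2 ≤ ‖u - v‖ ^ 2 := by
    rw [norm_sub_sq_real, real_inner_smul_right, norm_smul, Real.norm_of_nonneg hη0, mul_pow,
      real_inner_comm]
    linarith
  rw [hrw, NNReal.coe_one, one_mul]
  exact (pow_le_pow_iff_left₀ (norm_nonneg _) (norm_nonneg _) two_ne_zero).1 hsq

theorem LipschitzWith.norm_gradient_le {L : ℝ≥0} (hf : LipschitzWith L f) (u : E) :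
    ‖∇ f u‖ ≤ L := by
  rw [gradient, LinearIsometryEquiv.norm_map]
  exact norm_fderiv_le_of_lipschitz ℝ hf

theorem norm_sub_smul_gradient_sub_le_add {L : ℝ≥0} {η : ℝ} (hη : 0 ≤ η)
    (hstep : LipschitzWith 1 (fun u => u - η • ∇ f u))
    (hf : LipschitzWith L f) (hg : LipschitzWith L g) (u v : E) :
    ‖(u - η • ∇ f u) - (v - η • ∇ g v)‖ ≤ ‖u - v‖ + 2 * η * L := by
  have hsplit : (u - η • ∇ f u) - (v - η • ∇ g v)
      = ((u - η • ∇ f u) - (v - η • ∇ f v)) + η • (∇ g v - ∇ f v) := by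
    rw [smul_sub]; abel
  have hgrad : ‖∇ g v - ∇ f v‖ ≤ 2 * L := calc
    ‖∇ g v - ∇ f v‖ ≤ ‖∇ g v‖ + ‖∇ f v‖ := norm_sub_le _ _
    _ ≤ L + L := add_le_add (hg.norm_gradient_le v) (hf.norm_gradient_le v)
    _ = 2 * L := by ring
  calc ‖(u - η • ∇ f u) - (v - η • ∇ g v)‖
      ≤ ‖(u - η • ∇ f u) - (v - η • ∇ f v)‖ + ‖η • (∇ g v - ∇ f v)‖ :=
        hsplit ▸ norm_add_le _ _
    _ ≤ 1 * ‖u - v‖ + η * (2 * L) := by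
        rw [norm_smul, Real.norm_of_nonneg hη]
        gcongr
        exact hstep.norm_sub_le u v
    _ = ‖u - v‖ + 2 * η * L := by ring

end GradientStep

theorem sgd_convex_sensitivity_general
    {E : Type*} [NormedAddCommGroup E] [InnerProductSpace ℝ E] [CompleteSpace E]
    {X : Type*} (ℓ : E → X → ℝ) (L β : ℝ≥0)
    (hdiff : ∀ a : X, Differentiable ℝ (fun w => ℓ w a))
    (hconv : ∀ a : X, ConvexOn ℝ Set.univ (fun w => ℓ w a))
    (hlip : ∀ a : X, LipschitzWith L (fun w => ℓ w a))
    (hsmooth : ∀ a : X, LipschitzWith β (gradient (fun w => ℓ w a)))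
    (η : ℝ) (hη0 : 0 < η) (hη : η ≤ 2 / (β : ℝ))
    (N : ℕ) (x x' : Fin N → X) (i₀ : Fin N)
    (hneighbour : ∀ i, i ≠ i₀ → x i = x' i)
    (s : ℕ → Fin N)
    (w w' : ℕ → E) (h0 : w 0 = w' 0)
    (hw : ∀ t, w (t + 1) = w t - η • gradient (fun u => ℓ u (x (s t))) (w t))
    (hw' : ∀ t, w' (t + 1) = w' t - η • gradient (fun u => ℓ u (x' (s t))) (w' t)) :
    ∀ T : ℕ, ‖w T - w' T‖ ≤
      2 * η * (L : ℝ) * ((Finset.range T).filter fun t => s t = i₀).card := by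
  have hβ : 0 < β := pos_iff_ne_zero.2 fun hβ => by simp [hβ] at hη; linarith
  have hstep (a : X) : LipschitzWith 1 (fun u => u - η • ∇ (fun w => ℓ w a) u) :=
    (hconv a).lipschitzWith_one_sub_smul_gradient (hdiff a) hβ (hsmooth a) hη0.le hη
  intro T
  induction T with
  | zero => simp [h0]
  | succ T ih =>
    rw [Finset.range_add_one, Finset.filter_insert, hw, hw']
    by_cases hT : s T = i₀
    · rw [if_pos hT, Finset.card_insert_of_notMem (by simp), Nat.cast_succ, mul_add_one]
      grw [norm_sub_smul_gradient_sub_le_add hη0.le (hstep _) (hlip _) (hlip _), ih]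
    · rw [if_neg hT, ← hneighbour _ hT]
      exact ((hstep _).norm_sub_le _ _).trans (by simpa using ih)

/-- **Sensitivity of SGD on convex objectives.** Let `ℓ w a` be a loss that is
differentiable, convex, `L`-Lipschitz, and `β`-smooth in the weights `w` for
every example `a`, and let `0 < η ≤ 2/β`. For two neighbouring datasets
differing only at the index `i₀` and a common traversal order `s`, the SGD
iterates from a common initialisation satisfy
`‖w T − w' T‖ ≤ 2ηL · |{t < T : s t = i₀}|`; in particular, for `k` full
passes over the data this gives the bound `2kLη`. -/
theorem sgd_convex_sensitivity
    {E : Type*} [NormedAddCommGroup E] [InnerProductSpace ℝ E] [CompleteSpace E]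
    {X : Type*} (ℓ : E → X → ℝ) (L β : ℝ≥0) (hβ : 0 < β)
    (hdiff : ∀ a : X, Differentiable ℝ (fun w => ℓ w a))
    (hconv : ∀ a : X, ConvexOn ℝ Set.univ (fun w => ℓ w a))
    (hlip : ∀ a : X, LipschitzWith L (fun w => ℓ w a))
    (hsmooth : ∀ a : X, LipschitzWith β (gradient (fun w => ℓ w a)))
    (η : ℝ) (hη0 : 0 < η) (hη : η ≤ 2 / (β : ℝ))
    (N : ℕ) (x x' : Fin N → X) (i₀ : Fin N)
    (hneighbour : ∀ i, i ≠ i₀ → x i = x' i)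
    (s : ℕ → Fin N)
    (w w' : ℕ → E) (h0 : w 0 = w' 0)
    (hw : ∀ t, w (t + 1) = w t - η • gradient (fun u => ℓ u (x (s t))) (w t))
    (hw' : ∀ t, w' (t + 1) = w' t - η • gradient (fun u => ℓ u (x' (s t))) (w' t)) :
    ∀ T : ℕ, ‖w T - w' T‖ ≤
      2 * η * (L : ℝ) * ((Finset.range T).filter fun t => s t = i₀).card :=
  sgd_convex_sensitivity_general ℓ L β hdiff hconv hlip hsmooth η hη0 hη N x x' i₀ hneighbour s w w'
    h0 hw hw'
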